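/- arXiv:2505.08331 — 4 statements merged into one kernel-verified Lean document; each statement's English description precedes it below -/
import Mathlib

section
/- The maximal dimension of an abelian subalgebra of the free 2-step nilpotent Lie algebra on g ≥ 2 generators equals C(g,2) + 1, i.e., α(F_{g,2}) = g(g−1)/2 + 1. -/
open Module

def lieStab (K L : Type*) [Field K] [LieRing L] [LieAlgebra K L] (ℓ : Module.Dual K L) :
    Submodule K L where
  carrier := {y | ∀ x : L, ℓ ⁅x, y⁆ = 0}
  add_mem' := by
    intro a b ha hb x
    simp [lie_add, ha x, hb x]
  zero_mem' := by intro x; simp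
  smul_mem' := by
    intro c a ha x
    simp [lie_smul, ha x]

noncomputable def lieIndex (K L : Type*) [Field K] [LieRing L] [LieAlgebra K L] : ℕ :=
  sInf {d | ∃ ℓ : Module.Dual K L, d = Module.finrank K (lieStab K L ℓ)}

noncomputable def lieAlpha (K L : Type*) [Field K] [LieRing L] [LieAlgebra K L] : ℕ :=
  sSup {d | ∃ S : LieSubalgebra K L, IsLieAbelian (↥S) ∧ d = Module.finrank K (↥S)}

abbrev FreeNilpotentLie (K : Type*) [Field K] (g c : ℕ) :=
  FreeLieAlgebra K (Fin g) ⧸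
    LieModule.lowerCentralSeries K (FreeLieAlgebra K (Fin g)) (FreeLieAlgebra K (Fin g)) c

/-!
With `V = K^g`, the free two-step nilpotent Lie algebra on `V` is modelled by `V × ⋀²V` with
bracket `⁅(u, a), (w, b)⁆ = (0, u ∧ w)`: a linear map from `V` to a Lie algebra `L` with
`⁅L, ⁅L, L⁆⁆ = 0` extends to the model by `u ∧ w ↦ ⁅u, w⁆`, and this identifies the model with
`F_g / γ₃ F_g`. If `S` is an abelian subalgebra of the model, its projection `U` to `V` satisfies
`u ∧ w = 0` on `U`, hence `dim U ≤ 1`, and `S ⊆ U × ⋀²V` gives `dim S ≤ 1 + C(g, 2)`. For a line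
`U`, the subalgebra `U × ⋀²V` is abelian of that dimension.
-/

section Wedge
variable (R : Type*) [CommRing R] {V : Type*} [AddCommGroup V] [Module R V]

noncomputable def wedge : V →ₗ[R] V →ₗ[R] ⋀[R]^2 V :=
  LinearMap.mk₂ R (fun u w => exteriorPower.ιMulti R 2 ![u, w])
    (fun u u' w => by simpa using (exteriorPower.ιMulti R 2).map_vecCons_add ![w] u u')
    (fun c u w => by simpa using (exteriorPower.ιMulti R 2).map_vecCons_smul ![w] c u)
    (fun u w w' => by
      convert (exteriorPower.ιMulti R 2).map_update_add ![u, w] 1 w w' using 3 <;>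
        funext i <;> fin_cases i <;> rfl)
    (fun c u w => by
      convert (exteriorPower.ιMulti R 2).map_update_smul ![u, w] 1 c w using 3 <;>
        funext i <;> fin_cases i <;> rfl)

variable {R}

lemma wedge_apply (u w : V) : wedge R u w = exteriorPower.ιMulti R 2 ![u, w] := rfl

@[simp] lemma wedge_self (u : V) : wedge R u u = 0 :=
  (exteriorPower.ιMulti R 2).map_eq_zero_of_eq ![u, u] (i := 0) (j := 1) rfl (by decide)

lemma span_range_wedge : Submodule.span R {wedge R u w | (u : V) (w : V)} = ⊤ := by
  rw [eq_top_iff, ← exteriorPower.ιMulti_span R 2 V, Submodule.span_le]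
  rintro _ ⟨m, rfl⟩
  refine Submodule.subset_span ⟨m 0, m 1, ?_⟩
  rw [wedge_apply]
  congr 1
  funext i; fin_cases i <;> rfl

lemma wedge_ne_zero {K : Type*} [Field K] {E : Type*} [AddCommGroup E] [Module K E] {u w : E}
    (h : LinearIndependent K ![u, w]) : wedge K u w ≠ 0 := by
  let s : Set.powersetCard (Fin 2) 2 := ⟨Finset.univ, by simp⟩
  have hne := (exteriorPower.ιMulti_family_linearIndependent_field (n := 2) h).ne_zero s
  have he : ![u, w] ∘ Set.powersetCard.ofFinEmbEquiv.symm s = ![u, w] := by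
    set e := Set.powersetCard.ofFinEmbEquiv.symm s
    have h01 : e 0 < e 1 := e.strictMono (by decide)
    have h0 : e 0 = 0 := by omega
    have h1 : e 1 = 1 := by omega
    funext i; fin_cases i <;> simp [h0, h1]
  rwa [exteriorPower.ιMulti_family, he] at hne

lemma finrank_le_one_of_wedge_eq_zero {K : Type*} [Field K] {E : Type*} [AddCommGroup E]
    [Module K E] [FiniteDimensional K E] {U : Submodule K E}
    (hU : ∀ u ∈ U, ∀ w ∈ U, wedge K u w = 0) : finrank K U ≤ 1 := by
  by_contra! h
  have : Nontrivial U := Module.nontrivial_of_finrank_pos (R := K) (by omega)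
  obtain ⟨u, hu⟩ := exists_ne (0 : U)
  obtain ⟨w, huw⟩ := exists_linearIndependent_pair_of_one_lt_finrank h hu
  have huw' : LinearIndependent K ![(u : E), w] := by
    have h' := huw.map' U.subtype U.ker_subtype
    rwa [show U.subtype ∘ ![u, w] = ![(u : E), w] by funext i; fin_cases i <;> rfl] at h'
  exact wedge_ne_zero huw' (hU u u.2 w w.2)

end Wedge

section LowerCentralSeries

variable {R L : Type*} [CommRing R] [LieRing L] [LieAlgebra R L]

lemma lie_lie_mem_lowerCentralSeries_two (x y z : L) :
    ⁅x, ⁅y, z⁆⁆ ∈ LieModule.lowerCentralSeries R L L 2 := by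
  rw [LieModule.lowerCentralSeries_succ]
  refine LieSubmodule.lie_mem_lie (LieSubmodule.mem_top x) ?_
  rw [LieModule.lowerCentralSeries_succ, LieModule.lowerCentralSeries_zero]
  exact LieSubmodule.lie_mem_lie (LieSubmodule.mem_top y) (LieSubmodule.mem_top z)

lemma lowerCentralSeries_two_eq_bot_iff :
    LieModule.lowerCentralSeries R L L 2 = ⊥ ↔ ∀ x y z : L, ⁅x, ⁅y, z⁆⁆ = 0 := by
  refine ⟨fun h x y z => ?_, fun h => ?_⟩
  · have hmem := lie_lie_mem_lowerCentralSeries_two (R := R) x y z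
    rwa [h, LieSubmodule.mem_bot] at hmem
  · have hcentral : LieModule.lowerCentralSeries R L L 1 ≤ LieModule.maxTrivSubmodule R L L := by
      rw [LieModule.lowerCentralSeries_succ, LieModule.lowerCentralSeries_zero,
        LieSubmodule.lie_le_iff]
      exact fun y _ z _ => (LieModule.mem_maxTrivSubmodule R L L _).2 fun x => h x y z
    rw [LieModule.lowerCentralSeries_succ, LieSubmodule.lie_eq_bot_iff]
    exact fun x _ m hm => (LieModule.mem_maxTrivSubmodule R L L m).1 (hcentral hm) x

def LieIdeal.quotientMk (I : LieIdeal R L) : L →ₗ⁅R⁆ L ⧸ I :=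
  { LieSubmodule.Quotient.mk' I with
    map_lie' := fun {x y} => LieSubmodule.Quotient.mk_bracket (I := I) x y }

@[simp] lemma LieIdeal.quotientMk_apply (I : LieIdeal R L) (x : L) :
    I.quotientMk x = LieSubmodule.Quotient.mk x :=
  rfl

lemma lowerCentralSeries_two_quotient_eq_bot :
    LieModule.lowerCentralSeries R (L ⧸ LieModule.lowerCentralSeries R L L 2)
      (L ⧸ LieModule.lowerCentralSeries R L L 2) 2 = ⊥ := by
  rw [lowerCentralSeries_two_eq_bot_iff]
  intro x y z
  obtain ⟨x, rfl⟩ := LieSubmodule.Quotient.surjective_mk' _ x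
  obtain ⟨y, rfl⟩ := LieSubmodule.Quotient.surjective_mk' _ y
  obtain ⟨z, rfl⟩ := LieSubmodule.Quotient.surjective_mk' _ z
  simp only [LieSubmodule.Quotient.mk'_apply, ← LieSubmodule.Quotient.mk_bracket,
    LieSubmodule.Quotient.mk_eq_zero']
  exact lie_lie_mem_lowerCentralSeries_two x y z

end LowerCentralSeries

def FreeTwoStepNilpotent (R V : Type*) [CommRing R] [AddCommGroup V] [Module R V] : Type _ :=
  V × ⋀[R]^2 V

namespace FreeTwoStepNilpotent

variable {R V : Type*} [CommRing R] [AddCommGroup V] [Module R V]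

instance : AddCommGroup (FreeTwoStepNilpotent R V) := inferInstanceAs (AddCommGroup (V × _))

instance : Module R (FreeTwoStepNilpotent R V) := inferInstanceAs (Module R (V × _))

instance [Module.Finite R V] : Module.Finite R (FreeTwoStepNilpotent R V) :=
  inferInstanceAs (Module.Finite R (V × ⋀[R]^2 V))

@[ext] lemma ext {x y : FreeTwoStepNilpotent R V} (h₁ : x.1 = y.1) (h₂ : x.2 = y.2) : x = y :=
  Prod.ext h₁ h₂

@[simp] lemma fst_add (x y : FreeTwoStepNilpotent R V) : (x + y).1 = x.1 + y.1 := rfl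
@[simp] lemma snd_add (x y : FreeTwoStepNilpotent R V) : (x + y).2 = x.2 + y.2 := rfl
@[simp] lemma fst_zero : (0 : FreeTwoStepNilpotent R V).1 = 0 := rfl
@[simp] lemma snd_zero : (0 : FreeTwoStepNilpotent R V).2 = 0 := rfl

noncomputable instance : LieRing (FreeTwoStepNilpotent R V) where
  bracket x y := ((0 : V), wedge R x.1 y.1)
  add_lie x y z := Prod.ext (add_zero 0).symm (LinearMap.map_add₂ _ _ _ _)
  lie_add x y z := Prod.ext (add_zero 0).symm ((wedge R x.1).map_add _ _)
  lie_self x := Prod.ext rfl (wedge_self _)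
  leibniz_lie x y z := Prod.ext (add_zero 0).symm <| by
    show wedge R x.1 0 = wedge R 0 z.1 + wedge R y.1 0
    simp

noncomputable instance : LieAlgebra R (FreeTwoStepNilpotent R V) where
  lie_smul c x y := Prod.ext (smul_zero c).symm ((wedge R x.1).map_smul c y.1)

@[simp] lemma fst_lie (x y : FreeTwoStepNilpotent R V) : ⁅x, y⁆.1 = 0 := rfl
@[simp] lemma snd_lie (x y : FreeTwoStepNilpotent R V) : ⁅x, y⁆.2 = wedge R x.1 y.1 := rfl

lemma lowerCentralSeries_two_eq_bot :
    LieModule.lowerCentralSeries R (FreeTwoStepNilpotent R V) (FreeTwoStepNilpotent R V) 2 = ⊥ :=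
  lowerCentralSeries_two_eq_bot_iff.2 fun x y z => by ext <;> simp

variable (R V) in
def incl : V →ₗ[R] FreeTwoStepNilpotent R V := LinearMap.inl R V (⋀[R]^2 V)

variable (R V) in
def central : ⋀[R]^2 V →ₗ[R] FreeTwoStepNilpotent R V := LinearMap.inr R V (⋀[R]^2 V)

@[simp] lemma fst_incl (v : V) : (incl R V v).1 = v := rfl
@[simp] lemma snd_incl (v : V) : (incl R V v).2 = 0 := rfl
@[simp] lemma fst_central (a : ⋀[R]^2 V) : (central R V a).1 = 0 := rfl
@[simp] lemma snd_central (a : ⋀[R]^2 V) : (central R V a).2 = a := rfl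

lemma lie_incl_incl (u w : V) : ⁅incl R V u, incl R V w⁆ = central R V (wedge R u w) := rfl

lemma incl_fst_add_central_snd (x : FreeTwoStepNilpotent R V) :
    incl R V x.1 + central R V x.2 = x := by
  ext <;> simp

lemma eq_top_of_incl_mem {S : LieSubalgebra R (FreeTwoStepNilpotent R V)}
    (h : ∀ v, incl R V v ∈ S) : S = ⊤ := by
  have hcentral : ⊤ ≤ S.toSubmodule.comap (central R V) := by
    rw [← span_range_wedge, Submodule.span_le]
    rintro _ ⟨u, w, rfl⟩
    show central R V (wedge R u w) ∈ S
    rw [← lie_incl_incl]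
    exact S.lie_mem (h u) (h w)
  exact eq_top_iff.2 fun x _ =>
    incl_fst_add_central_snd x ▸ S.add_mem (h x.1) (hcentral Submodule.mem_top)

section Lift

variable {L : Type*} [LieRing L] [LieAlgebra R L] (f : V →ₗ[R] L)

def bracketAlternatingMap : V [⋀^Fin 2]→ₗ[R] L where
  toFun v := ⁅f (v 0), f (v 1)⁆
  map_update_add' v i x y := by fin_cases i <;> simp [lie_add, add_lie]
  map_update_smul' v i c x := by fin_cases i <;> simp [lie_smul, smul_lie]
  map_eq_zero_of_eq' v i j hv hij := by fin_cases i <;> fin_cases j <;> simp_all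

noncomputable def bracketLift : ⋀[R]^2 V →ₗ[R] L :=
  exteriorPower.alternatingMapLinearEquiv (bracketAlternatingMap f)

lemma bracketLift_wedge (u w : V) : bracketLift f (wedge R u w) = ⁅f u, f w⁆ :=
  exteriorPower.alternatingMapLinearEquiv_apply_ιMulti _ _

variable {f} (hL : LieModule.lowerCentralSeries R L L 2 = ⊥)
include hL

lemma lie_bracketLift (y : L) (a : ⋀[R]^2 V) : ⁅y, bracketLift f a⁆ = 0 := by
  suffices LieModule.toEnd R L L y ∘ₗ bracketLift f = 0 from LinearMap.congr_fun this a
  refine exteriorPower.linearMap_ext (AlternatingMap.ext fun m => ?_)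
  show ⁅y, bracketLift f (exteriorPower.ιMulti R 2 m)⁆ = 0
  rw [bracketLift, exteriorPower.alternatingMapLinearEquiv_apply_ιMulti]
  exact lowerCentralSeries_two_eq_bot_iff.1 hL y (f (m 0)) (f (m 1))

variable (f) in
noncomputable def lift : FreeTwoStepNilpotent R V →ₗ⁅R⁆ L :=
  { (f.coprod (bracketLift f) : FreeTwoStepNilpotent R V →ₗ[R] L) with
    map_lie' := fun {x y} => by
      show f 0 + bracketLift f (wedge R x.1 y.1) =
        ⁅f x.1 + bracketLift f x.2, f y.1 + bracketLift f y.2⁆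
      simp [bracketLift_wedge, lie_add, add_lie, lie_bracketLift hL,
        ← lie_skew (bracketLift f _)] }

lemma lift_incl (v : V) : lift f hL (incl R V v) = f v := by
  show f v + bracketLift f 0 = f v
  rw [map_zero, add_zero]

end Lift

section FreeLieAlgebra

variable (R) (X : Type*)

local notation "𝔣" => FreeLieAlgebra R X
local notation "𝔣₂" => 𝔣 ⧸ LieModule.lowerCentralSeries R 𝔣 𝔣 2

noncomputable def ofFreeLieAlgebra : 𝔣 →ₗ⁅R⁆ FreeTwoStepNilpotent R (X →₀ R) :=
  FreeLieAlgebra.lift R fun i => incl R _ (Finsupp.single i 1)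

noncomputable def toFreeLieAlgebraQuot : FreeTwoStepNilpotent R (X →₀ R) →ₗ⁅R⁆ 𝔣₂ :=
  lift (Finsupp.linearCombination R fun i => LieSubmodule.Quotient.mk (FreeLieAlgebra.of R i))
    lowerCentralSeries_two_quotient_eq_bot

variable {R X}

lemma ofFreeLieAlgebra_linearCombination (v : X →₀ R) :
    ofFreeLieAlgebra R X (Finsupp.linearCombination R (FreeLieAlgebra.of R) v) = incl R _ v := by
  induction v using Finsupp.induction_linear with
  | zero => simp
  | add v w hv hw => simp [hv, hw]
  | single i c =>
    rw [Finsupp.linearCombination_single, map_smul, ofFreeLieAlgebra, FreeLieAlgebra.lift_of_apply,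
      ← map_smul, Finsupp.smul_single_one]

lemma ofFreeLieAlgebra_surjective : Function.Surjective (ofFreeLieAlgebra R X) :=
  (LieHom.range_eq_top _).1 <| eq_top_of_incl_mem fun v =>
    ⟨_, ofFreeLieAlgebra_linearCombination v⟩

lemma toFreeLieAlgebraQuot_comp_ofFreeLieAlgebra :
    (toFreeLieAlgebraQuot R X).comp (ofFreeLieAlgebra R X) =
      LieIdeal.quotientMk (LieModule.lowerCentralSeries R 𝔣 𝔣 2) :=
  FreeLieAlgebra.hom_ext fun i => by
    simp [toFreeLieAlgebraQuot, ofFreeLieAlgebra, lift_incl]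

lemma lowerCentralSeries_two_le_ker :
    LieModule.lowerCentralSeries R 𝔣 𝔣 2 ≤ (ofFreeLieAlgebra R X).ker :=
  LieIdeal.map_eq_bot_iff.1 <| eq_bot_iff.2 <|
    (LieIdeal.map_lowerCentralSeries_le 2).trans lowerCentralSeries_two_eq_bot.le

lemma toFreeLieAlgebraQuot_bijective : Function.Bijective (toFreeLieAlgebraQuot R X) := by
  have hcomp := toFreeLieAlgebraQuot_comp_ofFreeLieAlgebra (R := R) (X := X)
  refine ⟨(injective_iff_map_eq_zero _).2 fun z hz => ?_, ?_⟩
  · obtain ⟨x, rfl⟩ := ofFreeLieAlgebra_surjective z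
    have hx : LieSubmodule.Quotient.mk x = (0 : 𝔣₂) := by
      rw [← hz]; exact (LieHom.congr_fun hcomp x).symm
    exact LieHom.mem_ker.1 <|
      lowerCentralSeries_two_le_ker (LieSubmodule.Quotient.mk_eq_zero'.1 hx)
  · refine Function.Surjective.of_comp (g := ofFreeLieAlgebra R X) ?_
    rw [← LieHom.coe_comp, hcomp]
    exact LieSubmodule.Quotient.surjective_mk' _

variable (R X) in
noncomputable def freeLieAlgebraQuotEquiv : 𝔣₂ ≃ₗ⁅R⁆ FreeTwoStepNilpotent R (X →₀ R) :=
  (LieEquiv.ofBijective (toFreeLieAlgebraQuot R X) toFreeLieAlgebraQuot_bijective).symm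

end FreeLieAlgebra

variable (R) in
def comapFst (U : Submodule R V) : LieSubalgebra R (FreeTwoStepNilpotent R V) where
  carrier := {x | x.1 ∈ U}
  add_mem' hx hy := U.add_mem hx hy
  zero_mem' := U.zero_mem
  smul_mem' c _ hx := U.smul_mem c hx
  lie_mem' _ _ := U.zero_mem

def comapFstEquiv (U : Submodule R V) : comapFst R U ≃ₗ[R] U × ⋀[R]^2 V where
  toFun x := (⟨x.1.1, x.2⟩, x.1.2)
  invFun p := ⟨(p.1, p.2), p.1.2⟩
  map_add' _ _ := rfl
  map_smul' _ _ := rfl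

lemma isLieAbelian_comapFst {U : Submodule R V} (hU : ∀ u ∈ U, ∀ w ∈ U, wedge R u w = 0) :
    IsLieAbelian (comapFst R U) :=
  ⟨fun x y => Subtype.ext <| ext rfl (hU _ x.2 _ y.2)⟩

lemma wedge_eq_zero_of_isLieAbelian (S : LieSubalgebra R (FreeTwoStepNilpotent R V))
    [IsLieAbelian S] {x y : FreeTwoStepNilpotent R V} (hx : x ∈ S) (hy : y ∈ S) :
    wedge R x.1 y.1 = 0 :=
  congrArg (fun z : S => (z : FreeTwoStepNilpotent R V).2) (trivial_lie_zero S S ⟨x, hx⟩ ⟨y, hy⟩)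

section Field

variable {K E : Type*} [Field K] [AddCommGroup E] [Module K E] [FiniteDimensional K E]

lemma finrank_comapFst (U : Submodule K E) :
    finrank K (comapFst K U) = finrank K U + finrank K (⋀[K]^2 E) := by
  rw [(comapFstEquiv U).finrank_eq, Module.finrank_prod]

lemma finrank_le_of_isLieAbelian (S : LieSubalgebra K (FreeTwoStepNilpotent K E))
    [IsLieAbelian S] : finrank K S ≤ finrank K (⋀[K]^2 E) + 1 := by
  let U := S.toSubmodule.map (LinearMap.fst K E (⋀[K]^2 E))
  have hU : finrank K U ≤ 1 := finrank_le_one_of_wedge_eq_zero <| by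
    rintro _ ⟨x, hx, rfl⟩ _ ⟨y, hy, rfl⟩
    exact wedge_eq_zero_of_isLieAbelian S hx hy
  have hS : S.toSubmodule ≤ (comapFst K U).toSubmodule := fun x hx => ⟨x, hx, rfl⟩
  calc finrank K S ≤ finrank K (comapFst K U) := Submodule.finrank_mono hS
    _ ≤ finrank K (⋀[K]^2 E) + 1 := by rw [finrank_comapFst]; omega

lemma exists_isLieAbelian_finrank_eq [Nontrivial E] :
    ∃ S : LieSubalgebra K (FreeTwoStepNilpotent K E),
      IsLieAbelian S ∧ finrank K S = finrank K (⋀[K]^2 E) + 1 := by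
  obtain ⟨v, hv⟩ := exists_ne (0 : E)
  refine ⟨comapFst K (K ∙ v), isLieAbelian_comapFst ?_, ?_⟩
  · intro u hu w hw
    obtain ⟨a, rfl⟩ := Submodule.mem_span_singleton.1 hu
    obtain ⟨b, rfl⟩ := Submodule.mem_span_singleton.1 hw
    simp
  · rw [finrank_comapFst, finrank_span_singleton hv, add_comm]

lemma lieAlpha_eq [Nontrivial E] :
    lieAlpha K (FreeTwoStepNilpotent K E) = finrank K (⋀[K]^2 E) + 1 := by
  obtain ⟨S, hS, hS_finrank⟩ := exists_isLieAbelian_finrank_eq (K := K) (E := E)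
  refine IsGreatest.csSup_eq ⟨⟨S, hS, hS_finrank.symm⟩, ?_⟩
  rintro _ ⟨S, hS, rfl⟩
  exact finrank_le_of_isLieAbelian S

end Field

end FreeTwoStepNilpotent

section Transfer

variable {K L₁ L₂ : Type*} [Field K] [LieRing L₁] [LieAlgebra K L₁] [LieRing L₂] [LieAlgebra K L₂]

lemma exists_isLieAbelian_finrank_eq_of_equiv (e : L₁ ≃ₗ⁅K⁆ L₂) {d : ℕ}
    (h : ∃ S : LieSubalgebra K L₁, IsLieAbelian S ∧ d = finrank K S) :
    ∃ S : LieSubalgebra K L₂, IsLieAbelian S ∧ d = finrank K S := by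
  obtain ⟨S, hS, rfl⟩ := h
  exact ⟨S.map e.toLieHom, (lie_abelian_iff_equiv_lie_abelian (e.lieSubalgebraMap S)).1 hS,
    (e.lieSubalgebraMap S).toLinearEquiv.finrank_eq⟩

lemma lieAlpha_congr (e : L₁ ≃ₗ⁅K⁆ L₂) : lieAlpha K L₁ = lieAlpha K L₂ :=
  congrArg sSup <| Set.ext fun _ =>
    ⟨exists_isLieAbelian_finrank_eq_of_equiv e, exists_isLieAbelian_finrank_eq_of_equiv e.symm⟩

end Transfer

theorem alpha_free_two_step_general
    (K : Type*) [Field K] (g : ℕ) (hg : 2 ≤ g) :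
    lieAlpha K (FreeNilpotentLie K g 2) = Nat.choose g 2 + 1 := by
  have : Nonempty (Fin g) := ⟨⟨0, by omega⟩⟩
  rw [lieAlpha_congr (FreeTwoStepNilpotent.freeLieAlgebraQuotEquiv K (Fin g)),
    FreeTwoStepNilpotent.lieAlpha_eq, exteriorPower.finrank_eq, Module.finrank_finsupp_self,
    Fintype.card_fin]

/-- `α(F_{g,2}) = C(g,2) + 1` for all `g ≥ 2`. -/
theorem alpha_free_two_step
    (K : Type*) [Field K] [CharZero K] (g : ℕ) (hg : 2 ≤ g) :
    lieAlpha K (FreeNilpotentLie K g 2) = Nat.choose g 2 + 1 :=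
  alpha_free_two_step_general K g hg
end

section
/- Let g be the 2-step nilpotent Lie algebra associated to a finite simple graph G(V,E). Then χ(g) = |V| + |E| − 2ν(G), where ν(G) is the matching number of G. -/
open Module

noncomputable def matchingNumber {V : Type*} (G : SimpleGraph V) : ℕ :=
  sSup {m | ∃ M : Finset (Sym2 V), ↑M ⊆ G.edgeSet ∧
    (∀ e ∈ M, ∀ f ∈ M, e ≠ f → ∀ v : V, v ∈ e → v ∉ f) ∧ M.card = m}

/-- `b` is a basis exhibiting `L` as the graph Lie algebra of the simple graph `G`:
vertices and edges index the basis, the bracket of two adjacent vertices (in increasing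
order) is the corresponding edge vector, non-adjacent vertices commute, and the edge
vectors are central. -/
def IsGraphLieBasis {V K L : Type*} [Fintype V] [LinearOrder V] [Field K] [LieRing L]
    [LieAlgebra K L] (G : SimpleGraph V) (b : Basis (V ⊕ ↥G.edgeSet) K L) : Prop :=
  (∀ i j : V, i < j → ∀ e : ↥G.edgeSet, (e : Sym2 V) = s(i, j) →
      ⁅b (Sum.inl i), b (Sum.inl j)⁆ = b (Sum.inr e)) ∧
  (∀ i j : V, ¬ G.Adj i j → ⁅b (Sum.inl i), b (Sum.inl j)⁆ = 0) ∧
  (∀ (e : ↥G.edgeSet) (x : L), ⁅x, b (Sum.inr e)⁆ = 0)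

/-!
For `ℓ ∈ 𝔤*` the stabiliser `𝔤(ℓ)` is the kernel of `y ↦ (ℓ ⁅v, y⁆)_{v ∈ V}`, because the
edge vectors are central; so its codimension is the rank of the skew-symmetric matrix
`A_ℓ = (ℓ ⁅v, w⁆)_{v,w}`, whose support lies in the edges of `G`. A skew-symmetric matrix of rank
`r` has a nonsingular principal `r × r` minor, and the support of a nonsingular skew-symmetric
matrix contains a perfect matching: given `x`, expanding `(A A⁻¹)_{xx} = 1` yields `y` with
`A_{xy} ≠ 0 ≠ (A⁻¹)_{yx}`, and Jacobi's complementary minor identity shows that deleting `x` and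
`y` leaves a nonsingular minor. Hence `rank A_ℓ ≤ 2ν(G)`. Conversely, for the functional that is
`1` on the edges of a maximum matching and `0` on the rest of the basis, every `y ∈ 𝔤(ℓ)` has
zero coordinate at each matched vertex, so `dim 𝔤(ℓ) ≤ |V| + |E| - 2ν(G)`.
-/

open Matrix Finset Submodule

namespace Matrix

section CommRing

variable {R n : Type*} [CommRing R] [Fintype n] [DecidableEq n]

theorem det_mul_det_toSquareBlockProp_inv (B : Matrix n n R) (hB : IsUnit B.det)
    (p : n → Prop) [DecidablePred p] :
    B.det * (B⁻¹.toSquareBlockProp p).det = (B.toSquareBlockProp fun i => ¬p i).det := by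
  -- `E` is `B⁻¹` with its `¬p` columns replaced by those of `1`; both `E` and `C = B * E` are
  -- block triangular.
  set E : Matrix n n R := of fun i j => if p j then B⁻¹ i j else (1 : Matrix n n R) i j
  set C : Matrix n n R := of fun i j => if p j then (1 : Matrix n n R) i j else B i j
  have hBE : B * E = C := by
    ext i j
    by_cases hj : p j
    · simp only [mul_apply, E, C, of_apply, if_pos hj]
      rw [← mul_apply, mul_nonsing_inv B hB]
    · simp only [mul_apply, E, C, of_apply, if_neg hj]
      rw [← mul_apply, Matrix.mul_one]
  have hne : ∀ i j, p i → ¬p j → i ≠ j := fun i j hi hj h => hj (h ▸ hi)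
  have hE : E.det = (B⁻¹.toSquareBlockProp p).det := by
    rw [twoBlockTriangular_det' E p fun i hi j hj => by simp [E, hj, hne i j hi hj]]
    have : E.toSquareBlockProp (fun i => ¬p i) = 1 := by
      ext i j
      simp [E, toSquareBlockProp_def, j.2, one_apply, Subtype.ext_iff]
    rw [this, det_one, mul_one]
    congr 1
    ext i j
    simp [E, toSquareBlockProp_def, j.2]
  have hC : C.det = (B.toSquareBlockProp fun i => ¬p i).det := by
    rw [twoBlockTriangular_det C p fun i hi j hj => by simp [C, hj, (hne j i hj hi).symm]]
    have : C.toSquareBlockProp p = 1 := by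
      ext i j
      simp [C, toSquareBlockProp_def, j.2, one_apply, Subtype.ext_iff]
    rw [this, det_one, one_mul]
    congr 1
    ext i j
    simp [C, toSquareBlockProp_def, j.2]
  rw [← hE, ← hC, ← det_mul, hBE]

theorem det_toSquareBlockProp_of_iff_eq_or_eq (M : Matrix n n R) {x y : n} (hxy : x ≠ y)
    (p : n → Prop) [DecidablePred p] (hp : ∀ i, p i ↔ i = x ∨ i = y) :
    (M.toSquareBlockProp p).det = M x x * M y y - M x y * M y x := by
  let e : Fin 2 ≃ {i // p i} :=
    { toFun := ![⟨x, (hp x).mpr (Or.inl rfl)⟩, ⟨y, (hp y).mpr (Or.inr rfl)⟩]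
      invFun := fun i => if (i : n) = x then 0 else 1
      left_inv := fun i => by fin_cases i <;> simp [hxy.symm]
      right_inv := fun i => by
        obtain ⟨i, hi⟩ := i
        rcases (hp i).mp hi with rfl | rfl <;> simp [hxy.symm] }
  rw [← det_submatrix_equiv_self e, det_fin_two]
  rfl

theorem transpose_inv_eq_neg {B : Matrix n n R} (hB : Bᵀ = -B) (hdet : IsUnit B.det) :
    B⁻¹ᵀ = -B⁻¹ := by
  rw [transpose_nonsing_inv, hB]
  exact inv_eq_left_inv (by rw [neg_mul_neg, nonsing_inv_mul B hdet])

end CommRing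

theorem apply_eq_neg_of_transpose_eq_neg {α n : Type*} [Neg α] {A : Matrix n n α} (hA : Aᵀ = -A)
    (i j : n) : A j i = -A i j :=
  congrFun (congrFun hA i) j

theorem apply_self_eq_zero_of_transpose_eq_neg {R n : Type*} [NonAssocRing R] [NoZeroDivisors R]
    [CharZero R] {A : Matrix n n R} (hA : Aᵀ = -A) (i : n) : A i i = 0 :=
  CharZero.eq_neg_self_iff.mp (apply_eq_neg_of_transpose_eq_neg hA i i)

theorem transpose_toSquareBlockProp_eq_neg {α n : Type*} [Neg α] {A : Matrix n n α}
    (hA : Aᵀ = -A) (p : n → Prop) : (A.toSquareBlockProp p)ᵀ = -A.toSquareBlockProp p :=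
  funext fun i => funext fun j => congrFun (congrFun hA i) j

variable {K n : Type*} [Field K] [Fintype n] [DecidableEq n]

theorem exists_ne_zero_and_det_toSquareBlockProp_ne_zero [CharZero K] {B : Matrix n n K}
    (hB : Bᵀ = -B) (hdet : B.det ≠ 0) (x : n) :
    ∃ y, B x y ≠ 0 ∧ (B.toSquareBlockProp (· ∉ ({x, y} : Finset n))).det ≠ 0 := by
  have hU : IsUnit B.det := isUnit_iff_ne_zero.mpr hdet
  have hxx : ∑ y, B x y * B⁻¹ y x ≠ 0 := by
    rw [← mul_apply, mul_nonsing_inv B hU]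
    simp
  obtain ⟨y, -, hy⟩ := Finset.exists_ne_zero_of_sum_ne_zero hxx
  have hBxy : B x y ≠ 0 := left_ne_zero_of_mul hy
  have hxy : x ≠ y := fun h => hBxy (h ▸ apply_self_eq_zero_of_transpose_eq_neg hB x)
  have hN := transpose_inv_eq_neg hB hU
  refine ⟨y, hBxy, ?_⟩
  rw [← det_mul_det_toSquareBlockProp_inv B hU (· ∈ ({x, y} : Finset n)),
    det_toSquareBlockProp_of_iff_eq_or_eq _ hxy _ (by simp),
    apply_self_eq_zero_of_transpose_eq_neg hN, apply_self_eq_zero_of_transpose_eq_neg hN,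
    apply_eq_neg_of_transpose_eq_neg hN y x]
  simpa [hdet] using right_ne_zero_of_mul hy

theorem exists_card_eq_rank_det_toSquareBlockProp_ne_zero (A : Matrix n n K) (hA : Aᵀ = -A) :
    ∃ t : Finset n, #t = A.rank ∧ (A.toSquareBlockProp (· ∈ t)).det ≠ 0 := by
  classical
  obtain ⟨s, -, -, hspan, hli⟩ :=
    exists_linearIndepOn_extension (linearIndepOn_empty K A.row) (Set.subset_univ ∅)
  set t := s.toFinset
  rw [← Set.coe_toFinset s] at hspan hli
  have hrow : ∀ k, A.row k ∈ span K (A.row '' t) := fun k => hspan ⟨k, trivial, rfl⟩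
  have hli' : LinearIndependent K fun i : t => A.row i := hli
  refine ⟨t, ?_, fun hdet => ?_⟩
  · have : span K (Set.range A.row) = span K (Set.range fun i : t => A.row i) := by
      rw [show Set.range (fun i : t => A.row i) = A.row '' t by ext; simp]
      exact le_antisymm (span_le.mpr (Set.range_subset_iff.mpr hrow))
        (span_mono (Set.image_subset_range _ _))
    rw [rank_eq_finrank_span_row, this, finrank_span_eq_card hli', Fintype.card_coe]
  obtain ⟨v, hv, hvA⟩ := exists_vecMul_eq_zero_iff.mpr hdet
  -- By skew-symmetry `φ (A.row k)` is minus the `k`-th entry of `∑ v i • A.row i`; it vanishes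
  -- on the rows indexed by `t`, hence on their span, which contains every row.
  let φ : (n → K) →ₗ[K] K := ∑ i : t, v i • LinearMap.proj (i : n)
  have hφA : ∀ k, φ (A.row k) = -∑ i : t, v i * A i k := fun k => by
    simp only [φ, LinearMap.sum_apply, LinearMap.smul_apply, LinearMap.proj_apply, smul_eq_mul,
      ← Finset.sum_neg_distrib, ← mul_neg]
    exact sum_congr rfl fun i _ => congrArg _ (apply_eq_neg_of_transpose_eq_neg hA i k)
  have hφ_t : A.row '' t ⊆ LinearMap.ker φ := by
    rintro _ ⟨m, hm, rfl⟩
    rw [SetLike.mem_coe, LinearMap.mem_ker, hφA, neg_eq_zero]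
    exact congrFun hvA ⟨m, hm⟩
  have hw : ∑ i : t, v i • A.row i = 0 := by
    ext k
    have := span_le.mpr hφ_t (hrow k)
    rw [LinearMap.mem_ker, hφA, neg_eq_zero] at this
    simpa using this
  exact hv (funext (Fintype.linearIndependent_iff.mp hli' v hw))

end Matrix

namespace SimpleGraph

variable {V : Type*} (G : SimpleGraph V)

def IsEdgeMatching (M : Finset (Sym2 V)) : Prop :=
  ↑M ⊆ G.edgeSet ∧ ∀ e ∈ M, ∀ f ∈ M, e ≠ f → ∀ v : V, v ∈ e → v ∉ f

variable {G} {M : Finset (Sym2 V)}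

theorem IsEdgeMatching.insert [DecidableEq V] (hM : G.IsEdgeMatching M) {e : Sym2 V}
    (he : e ∈ G.edgeSet) (hdisj : ∀ f ∈ M, ∀ v ∈ e, v ∉ f) : G.IsEdgeMatching (insert e M) := by
  refine ⟨by simpa [Set.insert_subset_iff] using ⟨he, hM.1⟩, ?_⟩
  simp only [Finset.mem_insert]
  rintro e' (rfl | he') f' (rfl | hf') hne v hv
  · exact absurd rfl hne
  · exact hdisj f' hf' v hv
  · exact fun hv' => hdisj e' he' v hv' hv
  · exact hM.2 e' he' f' hf' hne v hv

theorem IsEdgeMatching.eq_of_mem_of_mem (hM : G.IsEdgeMatching M) {u v w : V}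
    (hv : s(u, v) ∈ M) (hw : s(u, w) ∈ M) : v = w := by
  by_contra hvw
  exact hM.2 _ hv _ hw (fun h => hvw (Sym2.congr_right.mp h)) u (Sym2.mem_mk_left u v)
    (Sym2.mem_mk_left u w)

theorem IsEdgeMatching.card_biUnion_toFinset [DecidableEq V] (hM : G.IsEdgeMatching M) :
    #(M.biUnion Sym2.toFinset) = 2 * #M := by
  rw [card_biUnion, sum_const_nat fun e he => Sym2.card_toFinset_of_not_isDiag e
    (G.not_isDiag_of_mem_edgeSet (hM.1 he)), mul_comm]
  intro e he f hf hef
  rw [Function.onFun, Finset.disjoint_left]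
  intro v hve hvf
  exact hM.2 e he f hf hef v (Sym2.mem_toFinset.mp hve) (Sym2.mem_toFinset.mp hvf)

variable {K : Type*} [Field K] [CharZero K]

theorem exists_isEdgeMatching_two_mul_card_eq_of_det_ne_zero [DecidableEq V] {ι : Type*}
    [Fintype ι] [DecidableEq ι] (B : Matrix ι ι K) (hB : Bᵀ = -B) (hdet : B.det ≠ 0) (f : ι ↪ V)
    (hG : ∀ i j, B i j ≠ 0 → G.Adj (f i) (f j)) :
    ∃ M, G.IsEdgeMatching M ∧ (∀ e ∈ M, ∀ v ∈ e, v ∈ Set.range f) ∧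
      2 * #M = Fintype.card ι := by
  induction hN : Fintype.card ι using Nat.strong_induction_on generalizing ι with
  | _ N ih =>
    rcases isEmpty_or_nonempty ι with _ | ⟨⟨x⟩⟩
    · exact ⟨∅, ⟨by simp, by simp⟩, by simp, by simp [← hN]⟩
    obtain ⟨y, hxy, hdet'⟩ := B.exists_ne_zero_and_det_toSquareBlockProp_ne_zero hB hdet x
    have hx_ne_y : x ≠ y :=
      fun h => hxy (h ▸ Matrix.apply_self_eq_zero_of_transpose_eq_neg hB x)
    set p : ι → Prop := (· ∉ ({x, y} : Finset ι))
    have hcard : Fintype.card {i // p i} = N - 2 := by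
      rw [Fintype.card_subtype_compl, Fintype.card_coe, card_pair hx_ne_y, hN]
    have hN2 : 2 ≤ N := hN ▸ card_pair hx_ne_y ▸ card_le_univ _
    obtain ⟨M, hM, hMf, hMc⟩ := ih _ (by omega) (B.toSquareBlockProp p)
      (B.transpose_toSquareBlockProp_eq_neg hB p) hdet'
      ((Function.Embedding.subtype p).trans f) (fun i j => hG i j) rfl
    have hfree : ∀ e ∈ M, ∀ v ∈ s(f x, f y), v ∉ e := by
      intro e he v hv hve
      obtain ⟨⟨i, hi⟩, rfl⟩ := hMf e he v hve
      simp only [Function.Embedding.trans_apply, Function.Embedding.coe_subtype, Sym2.mem_iff,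
        f.injective.eq_iff] at hv
      exact hi (by simpa using hv)
    refine ⟨insert s(f x, f y) M, hM.insert (hG x y hxy) hfree, ?_, ?_⟩
    · simp only [Finset.mem_insert]
      rintro e (rfl | he) v hv
      · rcases Sym2.mem_iff.mp hv with rfl | rfl <;> exact Set.mem_range_self _
      · obtain ⟨i, rfl⟩ := hMf e he v hv
        exact Set.mem_range_self _
    · have hnew : s(f x, f y) ∉ M :=
        fun h => hfree _ h (f x) (Sym2.mem_mk_left _ _) (Sym2.mem_mk_left _ _)
      rw [card_insert_of_notMem hnew, mul_add, hMc, hcard]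
      omega

section Finite

variable [Finite V]

theorem bddAbove_matchingNumber_set : BddAbove {m | ∃ M : Finset (Sym2 V), ↑M ⊆ G.edgeSet ∧
    (∀ e ∈ M, ∀ f ∈ M, e ≠ f → ∀ v : V, v ∈ e → v ∉ f) ∧ M.card = m} := by
  have := Fintype.ofFinite V
  exact ⟨Fintype.card (Sym2 V), by rintro _ ⟨M, -, -, rfl⟩; exact card_le_univ M⟩

theorem IsEdgeMatching.card_le_matchingNumber (hM : G.IsEdgeMatching M) :
    #M ≤ matchingNumber G :=
  le_csSup bddAbove_matchingNumber_set ⟨M, hM.1, hM.2, rfl⟩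

variable (G) in
theorem exists_isEdgeMatching_card_eq_matchingNumber :
    ∃ M, G.IsEdgeMatching M ∧ #M = matchingNumber G := by
  obtain ⟨M, hMe, hMd, hM⟩ :=
    Nat.sSup_mem (by exact ⟨0, ∅, by simp, by simp, rfl⟩) (bddAbove_matchingNumber_set (G := G))
  exact ⟨M, ⟨hMe, hMd⟩, hM⟩

end Finite

theorem rank_le_two_mul_matchingNumber [Fintype V] [DecidableEq V] (A : Matrix V V K)
    (hA : Aᵀ = -A) (hG : ∀ i j, A i j ≠ 0 → G.Adj i j) : A.rank ≤ 2 * matchingNumber G := by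
  obtain ⟨t, ht, hdet⟩ := A.exists_card_eq_rank_det_toSquareBlockProp_ne_zero hA
  obtain ⟨M, hM, -, hMc⟩ :=
    G.exists_isEdgeMatching_two_mul_card_eq_of_det_ne_zero (A.toSquareBlockProp (· ∈ t))
    (A.transpose_toSquareBlockProp_eq_neg hA _) hdet
    (Function.Embedding.subtype _) fun i j => hG i j
  have := hM.card_le_matchingNumber
  rw [← ht, ← Fintype.card_coe t]
  omega

end SimpleGraph

theorem Module.Basis.finrank_le_card_sub_of_repr_eq_zero {ι K M : Type*} [Fintype ι] [Field K]
    [AddCommGroup M] [Module K M] (b : Basis ι K M) (s : Finset ι) {W : Submodule K M}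
    (hW : ∀ y ∈ W, ∀ i ∈ s, b.repr y i = 0) : finrank K W ≤ Fintype.card ι - #s := by
  classical
  have := Module.Finite.of_basis b
  have hle : W ≤ (Finsupp.supported K K (↑sᶜ : Set ι)).comap b.repr.toLinearMap := by
    intro y hy
    rw [Submodule.mem_comap, Finsupp.mem_supported']
    intro i hi
    exact hW y hy i (by simpa using hi)
  calc finrank K W ≤ finrank K ((Finsupp.supported K K (↑sᶜ : Set ι)).comap b.repr.toLinearMap) :=
        Submodule.finrank_mono hle
    _ = #sᶜ := by
        rw [LinearEquiv.finrank_eq (b.repr.ofSubmodule' _),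
          LinearEquiv.finrank_eq (Finsupp.supportedEquivFinsupp _), finrank_finsupp_self]
        exact Fintype.card_coe _
    _ = Fintype.card ι - #s := card_compl s

def bracketMatrix {ι K L : Type*} [CommRing K] [LieRing L] [LieAlgebra K L]
    (ℓ : Module.Dual K L) (x : ι → L) : Matrix ι ι K :=
  of fun i j => ℓ ⁅x i, x j⁆

theorem bracketMatrix_transpose {ι K L : Type*} [CommRing K] [LieRing L] [LieAlgebra K L]
    (ℓ : Module.Dual K L) (x : ι → L) : (bracketMatrix ℓ x)ᵀ = -bracketMatrix ℓ x := by
  ext i j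
  simp only [bracketMatrix, transpose_apply, of_apply]
  rw [← lie_skew, map_neg]
  rfl

noncomputable def matchingFunctional {V K L : Type*} [DecidableEq V] [Field K] [LieRing L]
    [LieAlgebra K L] {G : SimpleGraph V} (b : Basis (V ⊕ G.edgeSet) K L) (M : Finset (Sym2 V)) :
    Module.Dual K L :=
  b.constr K (Sum.elim 0 fun e => if (e : Sym2 V) ∈ M then 1 else 0)

namespace IsGraphLieBasis

variable {V K L : Type*} [Fintype V] [LinearOrder V] [Field K] [LieRing L] [LieAlgebra K L]
  {G : SimpleGraph V} {b : Basis (V ⊕ G.edgeSet) K L}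

theorem lie_eq_or_eq_neg_of_adj (hb : IsGraphLieBasis G b) {i j : V} (hij : G.Adj i j) :
    ⁅b (.inl i), b (.inl j)⁆ = b (.inr ⟨s(i, j), hij⟩) ∨
      ⁅b (.inl i), b (.inl j)⁆ = -b (.inr ⟨s(i, j), hij⟩) := by
  rcases lt_or_gt_of_ne hij.ne with h | h
  · exact .inl (hb.1 i j h _ rfl)
  · refine .inr ?_
    rw [← lie_skew, hb.1 j i h ⟨s(i, j), hij⟩ Sym2.eq_swap]

theorem adj_of_bracketMatrix_ne_zero (hb : IsGraphLieBasis G b) (ℓ : Module.Dual K L) {i j : V}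
    (h : bracketMatrix ℓ (b ∘ .inl) i j ≠ 0) : G.Adj i j := by
  by_contra hij
  exact h (by simp [bracketMatrix, hb.2.1 i j hij])

theorem apply_lie_eq_mulVec [Fintype G.edgeSet] (hb : IsGraphLieBasis G b) (ℓ : Module.Dual K L)
    (y : L) (i : V) :
    ℓ ⁅b (.inl i), y⁆ = (bracketMatrix ℓ (b ∘ .inl) *ᵥ fun j => b.repr y (.inl j)) i := by
  conv_lhs => rw [← b.sum_repr y]
  simp only [Fintype.sum_sum_type, lie_add, lie_sum, lie_smul, hb.2.2, smul_zero, sum_const_zero,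
    add_zero, map_sum, map_smul, smul_eq_mul]
  exact sum_congr rfl fun j _ => mul_comm _ _

theorem mem_lieStab_iff (hb : IsGraphLieBasis G b) {ℓ : Module.Dual K L} {y : L} :
    y ∈ lieStab K L ℓ ↔ ∀ i, ℓ ⁅b (.inl i), y⁆ = 0 := by
  refine ⟨fun hy i => hy _, fun hy x => ?_⟩
  have : ℓ ∘ₗ LieModule.toEnd K L L y = 0 := b.ext fun
    | .inl i => by
      change ℓ ⁅y, b (.inl i)⁆ = 0
      rw [← lie_skew, map_neg, hy i, neg_zero]
    | .inr e => by
      change ℓ ⁅y, b (.inr e)⁆ = 0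
      rw [hb.2.2 e y, map_zero]
  rw [← lie_skew, map_neg, neg_eq_zero]
  exact LinearMap.congr_fun this x

theorem card_sub_rank_le_finrank_lieStab [Fintype G.edgeSet] (hb : IsGraphLieBasis G b)
    (ℓ : Module.Dual K L) :
    Fintype.card V + Fintype.card G.edgeSet - (bracketMatrix ℓ (b ∘ .inl)).rank ≤
      finrank K (lieStab K L ℓ) := by
  have := Module.Finite.of_basis b
  let ψ : L →ₗ[K] V → K :=
    (bracketMatrix ℓ (b ∘ .inl)).mulVecLin ∘ₗ LinearMap.pi fun j => b.coord (.inl j)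
  have hker : LinearMap.ker ψ ≤ lieStab K L ℓ := fun y hy =>
    hb.mem_lieStab_iff.mpr fun i => by
      rw [hb.apply_lie_eq_mulVec]
      exact congrFun hy i
  have hrange : finrank K (LinearMap.range ψ) ≤ (bracketMatrix ℓ (b ∘ .inl)).rank :=
    Submodule.finrank_mono (LinearMap.range_comp_le_range _ _)
  have hdim : finrank K L = Fintype.card V + Fintype.card G.edgeSet := by
    rw [finrank_eq_card_basis b, Fintype.card_sum]
  have := ψ.finrank_range_add_finrank_ker
  have := Submodule.finrank_mono hker
  omega

variable {M : Finset (Sym2 V)}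

theorem matchingFunctional_lie_ne_zero_iff (hb : IsGraphLieBasis G b) (hM : ↑M ⊆ G.edgeSet)
    {i j : V} : matchingFunctional b M ⁅b (.inl i), b (.inl j)⁆ ≠ 0 ↔ s(i, j) ∈ M := by
  by_cases hij : G.Adj i j
  · rcases hb.lie_eq_or_eq_neg_of_adj hij with h | h <;> simp [h, matchingFunctional]
  · rw [hb.2.1 i j hij, map_zero]
    simpa using fun h => hij (hM h)

theorem repr_eq_zero_of_mem_lieStab_matchingFunctional [Fintype G.edgeSet]
    (hb : IsGraphLieBasis G b) (hM : G.IsEdgeMatching M) {y : L}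
    (hy : y ∈ lieStab K L (matchingFunctional b M)) {v w : V} (hvw : s(w, v) ∈ M) :
    b.repr y (.inl v) = 0 := by
  have h := hb.mem_lieStab_iff.mp hy w
  rw [hb.apply_lie_eq_mulVec, mulVec, dotProduct, sum_eq_single v] at h
  · exact (mul_eq_zero.mp h).resolve_left ((hb.matchingFunctional_lie_ne_zero_iff hM.1).mpr hvw)
  · intro j _ hjv
    have : bracketMatrix (matchingFunctional b M) (b ∘ .inl) w j = 0 :=
      not_not.mp (mt (hb.matchingFunctional_lie_ne_zero_iff hM.1).mp
        fun hwj => hjv (hM.eq_of_mem_of_mem hwj hvw))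
    rw [this, zero_mul]
  · simp

theorem finrank_lieStab_matchingFunctional_le [Fintype G.edgeSet] (hb : IsGraphLieBasis G b)
    (hM : G.IsEdgeMatching M) :
    finrank K (lieStab K L (matchingFunctional b M)) ≤
      Fintype.card V + Fintype.card G.edgeSet - 2 * #M := by
  have h := b.finrank_le_card_sub_of_repr_eq_zero ((M.biUnion Sym2.toFinset).map .inl)
    (W := lieStab K L (matchingFunctional b M)) fun y hy i hi => by
      simp only [mem_map, mem_biUnion, Sym2.mem_toFinset] at hi
      obtain ⟨v, ⟨e, he, hve⟩, rfl⟩ := hi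
      obtain ⟨w, rfl⟩ := Sym2.mem_iff_exists.mp hve
      exact hb.repr_eq_zero_of_mem_lieStab_matchingFunctional hM hy (by rwa [Sym2.eq_swap])
  rwa [card_map, hM.card_biUnion_toFinset, Fintype.card_sum] at h

end IsGraphLieBasis

theorem index_graph_lie_algebra_general
    {V K L : Type*} [Fintype V] [LinearOrder V] [Field K] [CharZero K] [LieRing L]
    [LieAlgebra K L] (G : SimpleGraph V) [Fintype ↥G.edgeSet]
    (b : Basis (V ⊕ ↥G.edgeSet) K L) (hb : IsGraphLieBasis G b) :
    lieIndex K L = Fintype.card V + Fintype.card ↥G.edgeSet - 2 * matchingNumber G := by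
  have lower (ℓ : Module.Dual K L) :
      Fintype.card V + Fintype.card G.edgeSet - 2 * matchingNumber G ≤
        finrank K (lieStab K L ℓ) := by
    have := G.rank_le_two_mul_matchingNumber _ (bracketMatrix_transpose ℓ (b ∘ .inl))
      fun _ _ => hb.adj_of_bracketMatrix_ne_zero ℓ
    have := hb.card_sub_rank_le_finrank_lieStab ℓ
    omega
  obtain ⟨M, hM, hMcard⟩ := G.exists_isEdgeMatching_card_eq_matchingNumber
  have upper := hb.finrank_lieStab_matchingFunctional_le hM
  rw [hMcard] at upper
  unfold lieIndex
  exact le_antisymm (le_trans (Nat.sInf_le ⟨_, rfl⟩) upper)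
    (le_csInf ⟨_, 0, rfl⟩ fun _ ⟨ℓ, hℓ⟩ => by rw [hℓ]; exact lower ℓ)

/-- The index of the graph Lie algebra of a finite simple graph `G(V,E)` is
`|V| + |E| − 2ν(G)`. -/
theorem index_graph_lie_algebra
    {V K L : Type*} [Fintype V] [LinearOrder V] [Field K] [CharZero K] [LieRing L]
    [LieAlgebra K L] [FiniteDimensional K L] (G : SimpleGraph V) [Fintype ↥G.edgeSet]
    (b : Basis (V ⊕ ↥G.edgeSet) K L) (hb : IsGraphLieBasis G b) :
    lieIndex K L = Fintype.card V + Fintype.card ↥G.edgeSet - 2 * matchingNumber G :=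
  index_graph_lie_algebra_general G b hb
end

section
/- Let g be the graph Lie algebra of a finite simple graph G(V,E), and let {{i₁,j₁},...,{i_m,j_m}} be a matching of G. If ℓ is the sum of the dual basis vectors corresponding to the central basis elements x_{i_k j_k}, then dim g(ℓ) = dim g − 2m. -/
open Module

/-! For `ℓ = ∑_{e ∈ M} x_e^*`, the value `ℓ ⁅x_k, x_i⁆` is nonzero exactly when `{k, i} ∈ M`,
and the edge vectors are central. Hence every edge vector and every vertex missed by `M` lies in
`g(ℓ)`. For a vertex `i` matched to `j`, the functional `y ↦ ℓ ⁅x_j, y⁆` is a nonzero multiple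
of the `x_i`-coordinate, so that coordinate vanishes on `g(ℓ)`. Thus `g(ℓ)` is spanned by the
basis vectors other than the `2m` matched vertices. -/

section StabilizerInBasis

variable {K L ι : Type*} [Field K] [LieRing L] [LieAlgebra K L] (b : Basis ι K L)
  (ℓ : Module.Dual K L)

lemma span_basis_le_lieStab {T : Set ι} (hT : ∀ u ∈ T, ∀ w, ℓ ⁅b w, b u⁆ = 0) :
    Submodule.span K (b '' T) ≤ lieStab K L ℓ := by
  rw [Submodule.span_le]
  rintro _ ⟨u, hu, rfl⟩ x
  have hzero : ℓ ∘ₗ (LieModule.toEnd K L L (b u)) = 0 :=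
    b.ext fun w ↦ by
      rw [LinearMap.comp_apply, LieModule.toEnd_apply_apply, ← lie_skew, map_neg, hT u hu w,
        neg_zero, LinearMap.zero_apply]
  rw [← lie_skew, map_neg, neg_eq_zero]
  exact LinearMap.congr_fun hzero x

lemma lieStab_le_span_basis_compl {P : Set ι}
    (hP : ∀ p ∈ P, ∃ w, ∀ q, ℓ ⁅b w, b q⁆ ≠ 0 ↔ q = p) :
    lieStab K L ℓ ≤ Submodule.span K (b '' Pᶜ) := by
  intro y hy
  rw [b.mem_span_image]
  intro p hp hpP
  obtain ⟨w, hw⟩ := hP p (by simpa using hpP)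
  have hcoord : ℓ ∘ₗ (LieModule.toEnd K L L (b w)) = ℓ ⁅b w, b p⁆ • b.coord p := by
    refine b.ext fun q ↦ ?_
    by_cases hq : q = p
    · simp [hq]
    · simpa [Finsupp.single_apply, Ne.symm hq] using not_not.mp (mt (hw q).mp hq)
  have hy_p := LinearMap.congr_fun hcoord y
  simp only [LinearMap.comp_apply, LieModule.toEnd_apply_apply, hy (b w), LinearMap.smul_apply,
    Basis.coord_apply, smul_eq_mul, zero_eq_mul] at hy_p
  exact Finsupp.mem_support_iff.mp hp (hy_p.resolve_left ((hw p).mpr rfl))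

lemma finrank_span_basis_image (s : Finset ι) :
    Module.finrank K (Submodule.span K (b '' s)) = s.card := by
  classical
  rw [← Finset.coe_image, finrank_span_finset_eq_card
    (b.linearIndependent.linearIndepOn_id.mono (by simp)),
    Finset.card_image_of_injective _ b.injective]

theorem finrank_lieStab_of_pairing [Fintype ι] (P : Finset ι)
    (hunpaired : ∀ u ∉ P, ∀ w, ℓ ⁅b w, b u⁆ = 0)
    (hpaired : ∀ p ∈ P, ∃ w, ∀ q, ℓ ⁅b w, b q⁆ ≠ 0 ↔ q = p) :
    Module.finrank K (lieStab K L ℓ) = Fintype.card ι - P.card := by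
  classical
  have hstab : lieStab K L ℓ = Submodule.span K (b '' ↑Pᶜ) := by
    refine le_antisymm ?_ (span_basis_le_lieStab b ℓ fun u hu ↦ hunpaired u (by simpa using hu))
    simpa using lieStab_le_span_basis_compl b ℓ hpaired
  rw [hstab, finrank_span_basis_image, Finset.card_compl]

end StabilizerInBasis

namespace SimpleGraph

variable {V : Type*} [DecidableEq V] {G : SimpleGraph V}

def matchedVertices (M : Finset ↥G.edgeSet) : Finset V :=
  M.biUnion fun e ↦ (e : Sym2 V).toFinset

@[simp]
lemma mem_matchedVertices {M : Finset ↥G.edgeSet} {v : V} :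
    v ∈ matchedVertices M ↔ ∃ e ∈ M, v ∈ (e : Sym2 V) := by
  simp [matchedVertices]

lemma card_matchedVertices {M : Finset ↥G.edgeSet}
    (hM : ∀ e ∈ M, ∀ f ∈ M, e ≠ f → ∀ v : V, v ∈ (e : Sym2 V) → v ∉ (f : Sym2 V)) :
    (matchedVertices M).card = 2 * M.card := by
  rw [matchedVertices, Finset.card_biUnion, Finset.sum_const_nat, mul_comm]
  · exact fun e _ ↦ Sym2.card_toFinset_of_not_isDiag _ (G.not_isDiag_of_mem_edgeSet e.2)
  · exact fun e he f hf hef ↦ Finset.disjoint_left.mpr fun v hve hvf ↦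
      hM e he f hf hef v (Sym2.mem_toFinset.mp hve) (Sym2.mem_toFinset.mp hvf)

end SimpleGraph

lemma Module.Basis.sum_coord_apply_self {K L ι α : Type*} [Field K] [AddCommGroup L]
    [Module K L] [DecidableEq α] (b : Basis ι K L) {f : α → ι} (hf : Function.Injective f)
    (s : Finset α) (a : α) :
    (∑ c ∈ s, b.coord (f c)) (b (f a)) = if a ∈ s then 1 else 0 := by
  classical
  simp [Finsupp.single_apply, hf.eq_iff]

namespace IsGraphLieBasis

open SimpleGraph

variable {V K L : Type*} [Fintype V] [LinearOrder V] [Field K] [LieRing L] [LieAlgebra K L]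
  {G : SimpleGraph V} {b : Basis (V ⊕ ↥G.edgeSet) K L}

lemma lie_inr_left (hb : IsGraphLieBasis G b) (e : ↥G.edgeSet) (x : L) :
    ⁅b (Sum.inr e), x⁆ = 0 := by
  rw [← lie_skew, hb.2.2 e x, neg_zero]

lemma lie_inl_inl_of_adj (hb : IsGraphLieBasis G b) {i j : V} (h : G.Adj i j) :
    ⁅b (Sum.inl i), b (Sum.inl j)⁆ = b (Sum.inr ⟨s(i, j), h⟩) ∨
      ⁅b (Sum.inl i), b (Sum.inl j)⁆ = -b (Sum.inr ⟨s(i, j), h⟩) := by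
  rcases h.ne.lt_or_gt with hij | hji
  · exact .inl (hb.1 i j hij _ rfl)
  · exact .inr (by rw [← lie_skew, hb.1 j i hji ⟨s(i, j), h⟩ Sym2.eq_swap])

variable (M : Finset ↥G.edgeSet)

lemma sum_coord_lie_inr (hb : IsGraphLieBasis G b) (w : V ⊕ ↥G.edgeSet) (f : ↥G.edgeSet) :
    (∑ e ∈ M, b.coord (Sum.inr e)) ⁅b w, b (Sum.inr f)⁆ = 0 := by
  rw [hb.2.2, map_zero]

lemma sum_coord_lie_inl_inl_ne_zero_iff (hb : IsGraphLieBasis G b) (i j : V) :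
    (∑ e ∈ M, b.coord (Sum.inr e)) ⁅b (Sum.inl i), b (Sum.inl j)⁆ ≠ 0 ↔
      ∃ e ∈ M, (e : Sym2 V) = s(i, j) := by
  classical
  by_cases h : G.Adj i j
  · have hval := b.sum_coord_apply_self Sum.inr_injective M ⟨s(i, j), h⟩
    have hmem : (⟨s(i, j), h⟩ : ↥G.edgeSet) ∈ M ↔ ∃ e ∈ M, (e : Sym2 V) = s(i, j) :=
      ⟨fun he ↦ ⟨_, he, rfl⟩, fun ⟨e, he, hei⟩ ↦ (Subtype.ext hei : e = ⟨s(i, j), h⟩) ▸ he⟩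
    rw [← hmem]
    rcases hb.lie_inl_inl_of_adj h with hbr | hbr <;>
      rw [hbr] <;> simp only [map_neg, hval] <;> split_ifs with hin <;> simp [hin]
  · rw [hb.2.1 i j h, map_zero]
    simp only [ne_eq, not_true_eq_false, false_iff, not_exists, not_and]
    exact fun e _ he ↦ h (G.mem_edgeSet.mp (he ▸ e.2))

lemma sum_coord_lie_eq_zero_of_notMem (hb : IsGraphLieBasis G b) (u : V ⊕ ↥G.edgeSet)
    (hu : u ∉ (matchedVertices M).map .inl) (w : V ⊕ ↥G.edgeSet) :
    (∑ e ∈ M, b.coord (Sum.inr e)) ⁅b w, b u⁆ = 0 := by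
  rcases u with i | f
  · rcases w with k | f
    · by_contra hne
      obtain ⟨e, he, hek⟩ := (hb.sum_coord_lie_inl_inl_ne_zero_iff M k i).mp hne
      exact hu (Finset.mem_map_of_mem _
        (mem_matchedVertices.mpr ⟨e, he, hek ▸ Sym2.mem_mk_right k i⟩))
    · rw [hb.lie_inr_left, map_zero]
  · exact hb.sum_coord_lie_inr M w f

lemma exists_partner_of_mem (hb : IsGraphLieBasis G b)
    (hM : ∀ e ∈ M, ∀ f ∈ M, e ≠ f → ∀ v : V, v ∈ (e : Sym2 V) → v ∉ (f : Sym2 V))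
    (p : V ⊕ ↥G.edgeSet) (hp : p ∈ (matchedVertices M).map .inl) :
    ∃ w, ∀ q, (∑ e ∈ M, b.coord (Sum.inr e)) ⁅b w, b q⁆ ≠ 0 ↔ q = p := by
  obtain ⟨i, hi, rfl⟩ := Finset.mem_map.mp hp
  obtain ⟨e, he, hie⟩ := mem_matchedVertices.mp hi
  set j := Sym2.Mem.other hie
  have hej : (e : Sym2 V) = s(j, i) := by rw [Sym2.eq_swap, Sym2.other_spec]
  refine ⟨.inl j, fun q ↦ ?_⟩
  rcases q with k | f
  · rw [hb.sum_coord_lie_inl_inl_ne_zero_iff, Function.Embedding.inl_apply, Sum.inl.injEq]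
    constructor
    · rintro ⟨e', he', he'k⟩
      have : e' = e := by_contra fun hne ↦
        hM e' he' e he hne j (he'k ▸ Sym2.mem_mk_left j k) (hej ▸ Sym2.mem_mk_left j i)
      exact Sym2.congr_right.mp (he'k.symm.trans (this ▸ hej))
    · rintro rfl
      exact ⟨e, he, hej⟩
  · simp [hb.sum_coord_lie_inr]

end IsGraphLieBasis

theorem stab_dim_of_matching_general
    {V K L : Type*} [Fintype V] [LinearOrder V] [Field K] [LieRing L]
    [LieAlgebra K L] (G : SimpleGraph V)
    (b : Basis (V ⊕ ↥G.edgeSet) K L) (hb : IsGraphLieBasis G b)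
    (M : Finset ↥G.edgeSet)
    (hM : ∀ e ∈ M, ∀ f ∈ M, e ≠ f → ∀ v : V, v ∈ (e : Sym2 V) → v ∉ (f : Sym2 V)) :
    Module.finrank K
        (lieStab K L (∑ e ∈ M, b.coord (Sum.inr e))) =
      Module.finrank K L - 2 * M.card := by
  classical
  rw [finrank_lieStab_of_pairing b _ _ (hb.sum_coord_lie_eq_zero_of_notMem M)
    (hb.exists_partner_of_mem M hM), Module.finrank_eq_card_basis b, Finset.card_map,
    SimpleGraph.card_matchedVertices hM]

/-- For a matching `M` of `G`, the functional `ℓ` given by the sum of the dual basis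
vectors of the corresponding central edge vectors satisfies `dim g(ℓ) = dim g − 2|M|`. -/
theorem stab_dim_of_matching
    {V K L : Type*} [Fintype V] [LinearOrder V] [Field K] [CharZero K] [LieRing L]
    [LieAlgebra K L] [FiniteDimensional K L] (G : SimpleGraph V)
    (b : Basis (V ⊕ ↥G.edgeSet) K L) (hb : IsGraphLieBasis G b)
    (M : Finset ↥G.edgeSet)
    (hM : ∀ e ∈ M, ∀ f ∈ M, e ≠ f → ∀ v : V, v ∈ (e : Sym2 V) → v ∉ (f : Sym2 V)) :
    Module.finrank K
        (lieStab K L (∑ e ∈ M, b.coord (Sum.inr e))) =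
      Module.finrank K L - 2 * M.card :=
  stab_dim_of_matching_general G b hb M hM
end

section
/- Let g be a filiform Lie algebra of dimension n ≥ 4 with adapted basis (e₁,...,eₙ) and define g_i = span(e_i,...,eₙ). Then each g_i is a characteristic ideal of g independent of the chosen adapted basis; in particular g_i = g^{i−1} for i ≥ 3, and g₂ is the preimage in g of the centralizer of (g/g⁴)² in g/g⁴. -/
open Module

/-- The subspace `g_i` (1-based indexing: `g_i` is spanned by `e_i, …, e_n`, where
`e_m = b ⟨m-1⟩`). -/
def gSpan {K L : Type*} [Field K] [LieRing L] [LieAlgebra K L] {n : ℕ}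
    (b : Basis (Fin n) K L) (i : ℕ) : Submodule K L :=
  Submodule.span K {x | ∃ j : Fin n, i ≤ j.val + 1 ∧ x = b j}

/-- `b` is an adapted (Vergne) basis of the filiform Lie algebra `L`, writing
`e_m = b ⟨m-1⟩` for the 1-based basis vectors. -/
def IsAdaptedBasis {K L : Type*} [Field K] [LieRing L] [LieAlgebra K L] {n : ℕ}
    (hn : 3 ≤ n) (b : Basis (Fin n) K L) : Prop :=
  (∀ (i : Fin n) (h1 : 1 ≤ i.val) (h2 : i.val ≤ n - 2),
      ⁅b ⟨0, by omega⟩, b i⁆ = b ⟨i.val + 1, by omega⟩) ∧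
  ⁅b ⟨0, by omega⟩, b ⟨n - 1, by omega⟩⁆ = 0 ∧
  ⁅b ⟨1, by omega⟩, b ⟨2, by omega⟩⁆ ∈ gSpan b 5 ∧
  (∀ i j : Fin n, i.val + j.val + 2 ≤ n → ⁅b i, b j⁆ ∈ gSpan b (i.val + j.val + 2))

/-- `L` is filiform of dimension `n`: nilpotent of nilpotency class exactly `n - 1`. -/
def IsFiliform (K L : Type*) [Field K] [LieRing L] [LieAlgebra K L] (n : ℕ) : Prop :=
  Module.finrank K L = n ∧
    LieModule.lowerCentralSeries K L L (n - 1) = ⊥ ∧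
    LieModule.lowerCentralSeries K L L (n - 2) ≠ ⊥

/-! Since `e_{k+2} = ad(e_1)^k e_2`, an adapted basis puts `g_{k+2}` inside `g^{k+1}`, which is
`lowerCentralSeries k` in Mathlib's indexing. In a filiform algebra the lower central series
loses at least two dimensions at the first step (a derived algebra of codimension one would give
`g^2 = g^3`) and at least one at each later step until it vanishes, so `dim g^{k+1} ≤ n - k - 1 =
dim g_{k+2}` and these inclusions are equalities. For `g_2`: brackets of `g_2` with `g_3 = g^2`
land in `g_5 = g^4`, while `[e_1, e_3] = e_4 ∉ g_5`, so `g_2 = {x | [x, g^2] ⊆ g^4}`. Both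
descriptions are intrinsic, so `g_i` does not depend on the adapted basis; applied to the image
of the basis under an automorphism, this shows that `g_i` is characteristic. -/

open LieModule

section gSpan

variable {K L : Type*} [Field K] [LieRing L] [LieAlgebra K L] {n : ℕ}

lemma gSpan_eq_span_image (b : Basis (Fin n) K L) (i : ℕ) :
    gSpan b i = Submodule.span K (b '' {j | i ≤ j.val + 1}) := by
  rw [gSpan]
  congr 1
  ext x
  simp [eq_comm]

lemma mem_gSpan_iff {b : Basis (Fin n) K L} {i : ℕ} {x : L} :
    x ∈ gSpan b i ↔ ∀ j : Fin n, j.val + 1 < i → b.repr x j = 0 := by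
  rw [gSpan_eq_span_image, b.mem_span_image]
  refine ⟨fun h j hj => ?_, fun h j hj => ?_⟩
  · by_contra hne
    exact absurd (h (Finsupp.mem_support_iff.mpr hne)) (by simp; omega)
  · by_contra hlt
    exact Finsupp.mem_support_iff.mp hj (h j (by simp at hlt; omega))

lemma basis_mem_gSpan (b : Basis (Fin n) K L) {i : ℕ} {j : Fin n} (h : i ≤ j.val + 1) :
    b j ∈ gSpan b i :=
  Submodule.subset_span ⟨j, h, rfl⟩

lemma gSpan_antitone (b : Basis (Fin n) K L) : Antitone (gSpan b) :=
  fun _ _ h => Submodule.span_mono fun _ ⟨j, hj, hx⟩ => ⟨j, h.trans hj, hx⟩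

lemma gSpan_le_iff {b : Basis (Fin n) K L} {i : ℕ} {p : Submodule K L} :
    gSpan b i ≤ p ↔ ∀ j : Fin n, i ≤ j.val + 1 → b j ∈ p := by
  simp [gSpan_eq_span_image, Submodule.span_le, Set.subset_def]

lemma Fin.card_subtype_le_val_add_one (n i : ℕ) (hi : 1 ≤ i) :
    Fintype.card {j : Fin n // i ≤ j.val + 1} = n + 1 - i := by
  have hcompl := Finset.card_filter_add_card_filter_not (s := Finset.univ)
    (fun j : Fin n => j.val < i - 1)
  rw [Fin.card_filter_val_lt, Finset.card_univ, Fintype.card_fin] at hcompl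
  have hfilter :
      Finset.card {j : Fin n | i ≤ j.val + 1} = Finset.card {j : Fin n | ¬ j.val < i - 1} := by
    congr 1
    ext j
    simp only [Finset.mem_filter, Finset.mem_univ, true_and]
    omega
  rw [Fintype.card_subtype]
  omega

lemma finrank_gSpan (b : Basis (Fin n) K L) {i : ℕ} (hi : 1 ≤ i) :
    finrank K (gSpan b i) = n + 1 - i := by
  rw [gSpan_eq_span_image, Set.image_eq_range]
  exact (finrank_span_eq_card (b.linearIndependent.comp _ Subtype.val_injective)).trans
    (Fin.card_subtype_le_val_add_one n i hi)

lemma lie_mem_of_gSpan {b : Basis (Fin n) K L} {i j : ℕ} {p : Submodule K L}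
    (h : ∀ k l : Fin n, i ≤ k.val + 1 → j ≤ l.val + 1 → ⁅b k, b l⁆ ∈ p)
    {x z : L} (hx : x ∈ gSpan b i) (hz : z ∈ gSpan b j) : ⁅x, z⁆ ∈ p := by
  have : Submodule.map₂ (LieAlgebra.ad K L : L →ₗ[K] Module.End K L)
      (gSpan b i) (gSpan b j) ≤ p := by
    rw [gSpan_eq_span_image, gSpan_eq_span_image, Submodule.map₂_span_span, Submodule.span_le]
    rintro _ ⟨_, ⟨k, hk, rfl⟩, _, ⟨l, hl, rfl⟩, rfl⟩
    exact h k l hk hl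
  exact this (Submodule.apply_mem_map₂ _ hx hz)

lemma gSpan_map (b : Basis (Fin n) K L) (f : L ≃ₗ[K] L) (i : ℕ) :
    gSpan (b.map f) i = (gSpan b i).map (f : L →ₗ[K] L) := by
  simp [gSpan_eq_span_image, Submodule.map_span, Set.image_image, Basis.coe_map]

end gSpan

section LowerCentralSeries

variable {R L M : Type*} [CommRing R] [LieRing L] [LieAlgebra R L]
  [AddCommGroup M] [Module R M] [LieRingModule L M]

lemma lie_mem_lowerCentralSeries_succ (x : L) {m : M} {k : ℕ}
    (hm : m ∈ lowerCentralSeries R L M k) : ⁅x, m⁆ ∈ lowerCentralSeries R L M (k + 1) := by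
  rw [lowerCentralSeries_succ]
  exact LieSubmodule.lie_mem_lie (LieSubmodule.mem_top x) hm

lemma lowerCentralSeries_eq_of_succ_eq {k : ℕ}
    (h : lowerCentralSeries R L M (k + 1) = lowerCentralSeries R L M k) {l : ℕ} (hkl : k ≤ l) :
    lowerCentralSeries R L M l = lowerCentralSeries R L M k := by
  induction l, hkl using Nat.le_induction with
  | base => rfl
  | succ l _ ih => rw [lowerCentralSeries_succ, ih, ← lowerCentralSeries_succ, h]

end LowerCentralSeries

section DerivedAlgebra

variable {R L : Type*} [CommRing R] [LieRing L] [LieAlgebra R L]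

lemma lowerCentralSeries_one_le_two_of_forall_sub_smul_mem (x : L)
    (h : ∀ y : L, ∃ c : R, y - c • x ∈ lowerCentralSeries R L L 1) :
    lowerCentralSeries R L L 1 ≤ lowerCentralSeries R L L 2 := by
  rw [lowerCentralSeries_succ, lowerCentralSeries_zero, LieSubmodule.lie_le_iff]
  intro y _ m _
  obtain ⟨c, hc⟩ := h y
  obtain ⟨d, hd⟩ := h m
  have hym : ⁅y, m⁆ = -⁅m, y - c • x⁆ + c • ⁅x, m - d • x⁆ := by
    rw [lie_sub, lie_sub, lie_smul, lie_smul, lie_self, smul_zero, sub_zero, ← lie_skew x m]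
    rw [← lie_skew m y, smul_neg]
    abel
  rw [hym]
  exact add_mem (neg_mem (lie_mem_lowerCentralSeries_succ m hc))
    (Submodule.smul_mem _ c (lie_mem_lowerCentralSeries_succ x hd))

lemma exists_lieIdeal_of_lowerCentralSeries_one_le {p : Submodule R L}
    (hp : (lowerCentralSeries R L L 1).toSubmodule ≤ p) :
    ∃ I : LieIdeal R L, I.toSubmodule = p :=
  ⟨{ p with
      lie_mem := fun {x m} _ => hp (lie_mem_lowerCentralSeries_succ x (LieSubmodule.mem_top m)) },
    rfl⟩

variable {K : Type*} [Field K] [LieAlgebra K L] [FiniteDimensional K L]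

lemma finrank_lowerCentralSeries_one_add_two_le_or :
    finrank K (lowerCentralSeries K L L 1).toSubmodule + 2 ≤ finrank K L ∨
      lowerCentralSeries K L L 2 = lowerCentralSeries K L L 1 := by
  set I := (lowerCentralSeries K L L 1).toSubmodule
  rcases Nat.lt_or_ge 1 (finrank K (L ⧸ I)) with hq | hq
  · left
    have := I.finrank_quotient_add_finrank
    omega
  · right
    obtain ⟨v, hv⟩ := finrank_le_one_iff.mp hq
    obtain ⟨x, rfl⟩ := I.mkQ_surjective v
    refine le_antisymm (antitone_lowerCentralSeries K L L (by norm_num))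
      (lowerCentralSeries_one_le_two_of_forall_sub_smul_mem x fun y => ?_)
    obtain ⟨c, hc⟩ := hv (I.mkQ y)
    refine ⟨c, ?_⟩
    rw [← LieSubmodule.mem_toSubmodule, ← Submodule.Quotient.eq]
    simpa using hc.symm

end DerivedAlgebra

namespace IsFiliform

variable {K L : Type*} [Field K] [LieRing L] [LieAlgebra K L] {n : ℕ}

lemma lowerCentralSeries_succ_ne (hfil : IsFiliform K L n) {k : ℕ} (hk : k + 2 ≤ n) :
    lowerCentralSeries K L L (k + 1) ≠ lowerCentralSeries K L L k := fun h =>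
  hfil.2.2 <| by
    rw [lowerCentralSeries_eq_of_succ_eq h (by omega : k ≤ n - 2),
      ← lowerCentralSeries_eq_of_succ_eq h (by omega : k ≤ n - 1), hfil.2.1]

lemma finrank_lowerCentralSeries_add_le [FiniteDimensional K L] (hfil : IsFiliform K L n)
    {k : ℕ} (hk1 : 1 ≤ k) (hk : k + 1 ≤ n) :
    finrank K (lowerCentralSeries K L L k).toSubmodule + k + 1 ≤ n := by
  induction k, hk1 using Nat.le_induction with
  | base =>
    rcases finrank_lowerCentralSeries_one_add_two_le_or (K := K) (L := L) with h | h
    · rw [hfil.1] at h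
      omega
    · have hbot : lowerCentralSeries K L L 1 = ⊥ := by
        rw [← lowerCentralSeries_eq_of_succ_eq h (by omega : 1 ≤ n - 1), hfil.2.1]
      rw [hbot, LieSubmodule.bot_toSubmodule, finrank_bot]
      omega
  | succ k hk1 ih =>
    have hlt : (lowerCentralSeries K L L (k + 1)).toSubmodule <
        (lowerCentralSeries K L L k).toSubmodule :=
      lt_of_le_of_ne (antitone_lowerCentralSeries K L L k.le_succ)
        (fun h => hfil.lowerCentralSeries_succ_ne hk (LieSubmodule.toSubmodule_injective h))
    have := Submodule.finrank_lt_finrank_of_lt hlt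
    have := ih (by omega)
    omega

end IsFiliform

namespace IsAdaptedBasis

variable {K L : Type*} [Field K] [LieRing L] [LieAlgebra K L] {n : ℕ} {hn : 3 ≤ n}
  {b : Basis (Fin n) K L}

lemma basis_mem_lowerCentralSeries (hb : IsAdaptedBasis hn b) (k : ℕ) (hk : k + 1 < n) :
    b ⟨k + 1, hk⟩ ∈ lowerCentralSeries K L L k := by
  induction k with
  | zero => exact LieSubmodule.mem_top _
  | succ k ih =>
    rw [← hb.1 ⟨k + 1, by omega⟩ (by simp) (by simp; omega)]
    exact lie_mem_lowerCentralSeries_succ _ (ih (by omega))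

lemma gSpan_le_lowerCentralSeries (hb : IsAdaptedBasis hn b) (k : ℕ) :
    gSpan b (k + 2) ≤ (lowerCentralSeries K L L k).toSubmodule :=
  gSpan_le_iff.mpr fun ⟨j, hj⟩ hkj => by
    obtain ⟨m, rfl⟩ : ∃ m, j = m + 1 := ⟨j - 1, by simp at hkj; omega⟩
    exact antitone_lowerCentralSeries K L L (by simp at hkj; omega)
      (hb.basis_mem_lowerCentralSeries m hj)

lemma map (hb : IsAdaptedBasis hn b) (f : L ≃ₗ⁅K⁆ L) :
    IsAdaptedBasis hn (b.map f.toLinearEquiv) := by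
  have hlie : ∀ i j, ⁅b.map f.toLinearEquiv i, b.map f.toLinearEquiv j⁆ = f ⁅b i, b j⁆ :=
    fun i j => (f.toLieHom.map_lie _ _).symm
  have hmem : ∀ {x : L} {i : ℕ}, x ∈ gSpan b i → f x ∈ gSpan (b.map f.toLinearEquiv) i :=
    fun hx => by
      rw [gSpan_map]
      exact Submodule.mem_map_of_mem hx
  refine ⟨fun i h1 h2 => ?_, ?_, ?_, fun i j hij => ?_⟩
  · rw [hlie, hb.1 i h1 h2, Basis.map_apply]
    rfl
  · rw [hlie, hb.2.1, map_zero]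
  · rw [hlie]
    exact hmem hb.2.2.1
  · rw [hlie]
    exact hmem (hb.2.2.2 i j hij)

variable [FiniteDimensional K L]

lemma gSpan_eq_lowerCentralSeries (hb : IsAdaptedBasis hn b) (hfil : IsFiliform K L n)
    {k : ℕ} (hk1 : 1 ≤ k) (hk : k + 1 ≤ n) :
    gSpan b (k + 2) = (lowerCentralSeries K L L k).toSubmodule :=
  Submodule.eq_of_le_of_finrank_le (hb.gSpan_le_lowerCentralSeries k) <| by
    have := hfil.finrank_lowerCentralSeries_add_le hk1 hk
    rw [finrank_gSpan b (by omega)]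
    omega

lemma lie_mem_gSpan_five (hb : IsAdaptedBasis hn b) (hfil : IsFiliform K L n) (hn4 : 4 ≤ n)
    {x z : L} (hx : x ∈ gSpan b 2) (hz : z ∈ gSpan b 3) : ⁅x, z⁆ ∈ gSpan b 5 := by
  have hdeep : ∀ (y : L) (j : Fin n), 3 ≤ j.val → ⁅y, b j⁆ ∈ gSpan b 5 := by
    rintro y ⟨j, hj⟩ h3
    obtain ⟨m, rfl⟩ : ∃ m, j = m + 1 := ⟨j - 1, by simp at h3; omega⟩
    rw [hb.gSpan_eq_lowerCentralSeries hfil (k := 3) (by norm_num) (by omega)]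
    exact lie_mem_lowerCentralSeries_succ y (antitone_lowerCentralSeries K L L
      (by simp at h3; omega) (hb.basis_mem_lowerCentralSeries m hj))
  refine lie_mem_of_gSpan (fun k l hk hl => ?_) hx hz
  rcases Nat.lt_or_ge 2 l.val with hl3 | hl2
  · exact hdeep _ l hl3
  rcases Nat.lt_or_ge 2 k.val with hk3 | hk2
  · rw [← lie_skew]
    exact neg_mem (hdeep _ k hk3)
  obtain ⟨l, hln⟩ := l
  obtain ⟨k, hkn⟩ := k
  obtain rfl : l = 2 := by simp at hl hl2; omega
  rcases (by simp at hk hk2; omega : k = 1 ∨ k = 2) with rfl | rfl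
  · exact hb.2.2.1
  · rw [lie_self]
    exact zero_mem _

lemma coe_gSpan_two (hb : IsAdaptedBasis hn b) (hfil : IsFiliform K L n) (hn4 : 4 ≤ n) :
    (gSpan b 2 : Set L) = {x | ∀ z ∈ lowerCentralSeries K L L 1,
        ⁅x, z⁆ ∈ lowerCentralSeries K L L 3} := by
  have h3 : gSpan b 3 = (lowerCentralSeries K L L 1).toSubmodule :=
    hb.gSpan_eq_lowerCentralSeries hfil le_rfl (by omega)
  have h5 : gSpan b 5 = (lowerCentralSeries K L L 3).toSubmodule :=
    hb.gSpan_eq_lowerCentralSeries hfil (by norm_num) (by omega)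
  ext x
  simp only [SetLike.mem_coe, Set.mem_ofPred_eq, ← LieSubmodule.mem_toSubmodule, ← h3, ← h5]
  refine ⟨fun hx z hz => hb.lie_mem_gSpan_five hfil hn4 hx hz, fun hx => ?_⟩
  set c := b.repr x ⟨0, by omega⟩
  have hy : x - c • b ⟨0, by omega⟩ ∈ gSpan b 2 := mem_gSpan_iff.mpr fun ⟨j, _⟩ hj => by
    obtain rfl : j = 0 := by simp at hj; omega
    simp [c]
  have he3 : b ⟨2, by omega⟩ ∈ gSpan b 3 := basis_mem_gSpan b le_rfl
  have hc : c • ⁅b ⟨0, by omega⟩, b ⟨2, by omega⟩⁆ ∈ gSpan b 5 := by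
    rw [← sub_sub_cancel ⁅x, b ⟨2, by omega⟩⁆ (c • _), ← smul_lie, ← sub_lie]
    exact sub_mem (hx _ he3) (hb.lie_mem_gSpan_five hfil hn4 hy he3)
  rw [hb.1 ⟨2, by omega⟩ (by simp) (by simp; omega)] at hc
  have hc0 : c = 0 := by simpa using mem_gSpan_iff.mp hc ⟨3, by omega⟩ (by simp)
  simpa [hc0] using hy


lemma gSpan_eq_gSpan (hb : IsAdaptedBasis hn b) (hfil : IsFiliform K L n) (hn4 : 4 ≤ n)
    {b' : Basis (Fin n) K L} (hb' : IsAdaptedBasis hn b') {i : ℕ} (hi2 : 2 ≤ i)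
    (hin : i ≤ n) :
    gSpan b i = gSpan b' i := by
  obtain ⟨k, rfl⟩ : ∃ k, i = k + 2 := ⟨i - 2, by omega⟩
  rcases Nat.eq_zero_or_pos k with rfl | hk
  · exact SetLike.coe_injective
      ((hb.coe_gSpan_two hfil hn4).trans (hb'.coe_gSpan_two hfil hn4).symm)
  · rw [hb.gSpan_eq_lowerCentralSeries hfil hk (by omega),
      hb'.gSpan_eq_lowerCentralSeries hfil hk (by omega)]

lemma map_gSpan_lieEquiv (hb : IsAdaptedBasis hn b) (hfil : IsFiliform K L n) (hn4 : 4 ≤ n)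
    (f : L ≃ₗ⁅K⁆ L) {i : ℕ} (hi2 : 2 ≤ i) (hin : i ≤ n) :
    (gSpan b i).map (f.toLinearEquiv : L →ₗ[K] L) = gSpan b i := by
  rw [← gSpan_map]
  exact (hb.map f).gSpan_eq_gSpan hfil hn4 hb hi2 hin

lemma exists_lieIdeal_eq_gSpan (hb : IsAdaptedBasis hn b) (hfil : IsFiliform K L n) {i : ℕ}
    (hi2 : 2 ≤ i) (hin : i ≤ n) :
    ∃ I : LieIdeal K L, I.toSubmodule = gSpan b i := by
  obtain ⟨k, rfl⟩ : ∃ k, i = k + 2 := ⟨i - 2, by omega⟩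
  rcases Nat.eq_zero_or_pos k with rfl | hk
  · refine exists_lieIdeal_of_lowerCentralSeries_one_le ?_
    rw [← hb.gSpan_eq_lowerCentralSeries hfil le_rfl (by omega)]
    exact gSpan_antitone b (by norm_num)
  · exact ⟨_, (hb.gSpan_eq_lowerCentralSeries hfil hk (by omega)).symm⟩

end IsAdaptedBasis

/-- For a filiform Lie algebra of dimension `n ≥ 4` with adapted basis, the subspaces
`g_i = span(e_i, …, e_n)` (for `2 ≤ i ≤ n`) do not depend on the chosen adapted basis and
are characteristic ideals; moreover `g_i = g^{i-1}` for `i ≥ 3` and `g₂` is the preimage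
of the centralizer of `(g/g⁴)²` in `g/g⁴`, i.e.
`g₂ = {x | ∀ z ∈ g², ⁅x,z⁆ ∈ g⁴}`. -/
theorem filiform_gi_characteristic
    (K L : Type*) [Field K] [LieRing L] [LieAlgebra K L]
    [FiniteDimensional K L] (n : ℕ) (hn : 4 ≤ n) (hfil : IsFiliform K L n)
    (b b' : Basis (Fin n) K L)
    (hb : IsAdaptedBasis (by omega) b) (hb' : IsAdaptedBasis (by omega) b') :
    (∀ i : ℕ, 2 ≤ i → i ≤ n →
      gSpan b i = gSpan b' i ∧
      (∃ I : LieIdeal K L, I.toSubmodule = gSpan b i) ∧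
      (∀ f : L ≃ₗ⁅K⁆ L,
        Submodule.map (f.toLinearEquiv : L →ₗ[K] L) (gSpan b i) = gSpan b i)) ∧
    (∀ i : ℕ, 3 ≤ i → i ≤ n →
      gSpan b i = (LieModule.lowerCentralSeries K L L (i - 2)).toSubmodule) ∧
    ((gSpan b 2 : Set L) =
      {x : L | ∀ z ∈ LieModule.lowerCentralSeries K L L 1,
        ⁅x, z⁆ ∈ LieModule.lowerCentralSeries K L L 3}) := by
  refine ⟨fun i hi2 hin => ⟨hb.gSpan_eq_gSpan hfil hn hb' hi2 hin,
      hb.exists_lieIdeal_eq_gSpan hfil hi2 hin,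
      fun f => hb.map_gSpan_lieEquiv hfil hn f hi2 hin⟩,
    fun i hi3 hin => ?_, hb.coe_gSpan_two hfil hn⟩
  obtain ⟨k, rfl⟩ : ∃ k, i = k + 2 := ⟨i - 2, by omega⟩
  exact hb.gSpan_eq_lowerCentralSeries hfil (by omega) (by omega)
end
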